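/- Sound typing of equations: if Γ ⊢ S is derivable, then Γ ⊨ S, i.e., for every input map ρ_in and every partial output map ρ¹ ∈ ⟦Γ⟧_{ρ_in}, there exists a total output map ρ² such that (ρ_in, ρ¹·ρ²) ∈ ⟦S⟧. -/

import Mathlib

/-- Streams of optional integer values. -/
def RStream : Type := ℕ → Option ℤ

/-- `w₁` is less defined than `w₂`. -/
def LessDef (w₁ w₂ : RStream) : Prop := ∀ n, w₁ n = none ∨ w₁ n = w₂ n

/-- Last defined value of `w` at or before `n`. -/
def Last (w : RStream) : ℕ → Option ℤ
  | 0 => w 0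
  | n+1 => match w (n+1) with
    | some v => some v
    | none => Last w n

/-- Semantics of hold accesses. -/
def Hold (w : RStream) (n : ℕ) (v : Option ℤ) : Option ℤ :=
  match Last w n with
  | some u => some u
  | none => v

/-- Semantics of prev accesses. -/
def Prev (w : RStream) (n : ℕ) (v : Option ℤ) : Option ℤ :=
  match w n, n with
  | none, _ => none
  | some _, 0 => v
  | some _, m+1 =>
    match Last w m with
    | some u => some u
    | none => v

/-- Pacing annotations: positive boolean formulas over input variables. -/
inductive Pacing (Vi : Type) where
  | pvar (x : Vi)
  | top
  | pand (τ₁ τ₂ : Pacing Vi)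
  | por (τ₁ τ₂ : Pacing Vi)

/-- Denotation of pacing annotations as sets of time points. -/
def PacingDen {Vi : Type} (ρi : Vi → RStream) : Pacing Vi → Set ℕ
  | .pvar x => {n | ρi x n ≠ none}
  | .top => Set.univ
  | .pand τ₁ τ₂ => PacingDen ρi τ₁ ∩ PacingDen ρi τ₂
  | .por τ₁ τ₂ => PacingDen ρi τ₁ ∪ PacingDen ρi τ₂

/-- Semantic refinement of pacing annotations. -/
def Refines {Vi : Type} (τ τ' : Pacing Vi) : Prop :=
  ∀ ρi : Vi → RStream, PacingDen ρi τ ⊆ PacingDen ρi τ'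

/-- The set of τ-well-paced streams. -/
def WellPaced {Vi : Type} (τ : Pacing Vi) (ρi : Vi → RStream) : Set RStream :=
  {w | ∀ n, n ∈ PacingDen ρi τ ↔ w n ≠ none}

/-- Stream expressions over input variables `Vi` and output variables `Vo`. -/
inductive Expr (Vi Vo : Type) where
  | const (v : ℤ)
  | varIn (x : Vi)
  | varOut (x : Vo)
  | prevIn (x : Vi) (e : Expr Vi Vo)
  | prevOut (x : Vo) (e : Expr Vi Vo)
  | holdIn (x : Vi) (e : Expr Vi Vo)
  | holdOut (x : Vo) (e : Expr Vi Vo)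
  | add (e₁ e₂ : Expr Vi Vo)

/-- Addition propagating undefinedness. -/
def addOpt : Option ℤ → Option ℤ → Option ℤ
  | some a, some b => some (a + b)
  | _, _ => none

/-- Total denotational semantics of stream expressions. -/
def ExprDen {Vi Vo : Type} (ρi : Vi → RStream) (ρo : Vo → RStream) : Expr Vi Vo → RStream
  | .const v => fun _ => some v
  | .varIn x => ρi x
  | .varOut x => ρo x
  | .prevIn x e => fun n => Prev (ρi x) n (ExprDen ρi ρo e n)
  | .prevOut x e => fun n => Prev (ρo x) n (ExprDen ρi ρo e n)
  | .holdIn x e => fun n => Hold (ρi x) n (ExprDen ρi ρo e n)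
  | .holdOut x e => fun n => Hold (ρo x) n (ExprDen ρi ρo e n)
  | .add e₁ e₂ => fun n => addOpt (ExprDen ρi ρo e₁ n) (ExprDen ρi ρo e₂ n)

/-- A partial output stream, viewed as a stream (undefined entries are the always-none stream). -/
def getStream (o : Option RStream) : RStream := o.getD (fun _ => none)

/-- Partial semantics of stream expressions w.r.t. a partial output map. -/
def PExprDen {Vi Vo : Type} (ρi : Vi → RStream) (ρo : Vo → Option RStream) : Expr Vi Vo → RStream
  | .const v => fun _ => some v
  | .varIn x => ρi x
  | .varOut x => getStream (ρo x)
  | .prevIn x e => fun n => Prev (ρi x) n (PExprDen ρi ρo e n)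
  | .prevOut x e => fun n => Prev (getStream (ρo x)) n (PExprDen ρi ρo e n)
  | .holdIn x e => fun n => Hold (ρi x) n (PExprDen ρi ρo e n)
  | .holdOut x e => fun n => Hold (getStream (ρo x)) n (PExprDen ρi ρo e n)
  | .add e₁ e₂ => fun n => addOpt (PExprDen ρi ρo e₁ n) (PExprDen ρi ρo e₂ n)

/-- Totalization of a partial output map by a total one. -/
def totalize {Vo : Type} (ρ₁ : Vo → Option RStream) (ρ₂ : Vo → RStream) : Vo → RStream :=
  fun x => (ρ₁ x).getD (ρ₂ x)

/-- An annotated stream equation `x @ τ := e`. -/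
structure Equ (Vi Vo : Type) where
  out : Vo
  pac : Pacing Vi
  expr : Expr Vi Vo

/-- Satisfaction of a single equation. -/
def SatEq {Vi Vo : Type} (eq : Equ Vi Vo) (ρi : Vi → RStream) (ρo : Vo → RStream) : Prop :=
  ρo eq.out ∈ WellPaced eq.pac ρi ∧ LessDef (ρo eq.out) (ExprDen ρi ρo eq.expr)

/-- Satisfaction of a specification (a list of equations). -/
def SatSpec {Vi Vo : Type} (S : List (Equ Vi Vo)) (ρi : Vi → RStream) (ρo : Vo → RStream) : Prop :=
  ∀ eq ∈ S, SatEq eq ρi ρo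

/-- Consistency: every input map admits a satisfying output map. -/
def Consistent {Vi Vo : Type} (S : List (Equ Vi Vo)) : Prop :=
  ∀ ρi : Vi → RStream, ∃ ρo : Vo → RStream, SatSpec S ρi ρo

/-- Typing contexts. -/
def Ctx (Vi Vo : Type) : Type := Vo → Option (Pacing Vi)

/-- Interpretation of typing contexts as sets of partial output maps. -/
def InCtx {Vi Vo : Type} (Γ : Ctx Vi Vo) (ρi : Vi → RStream) (ρo : Vo → Option RStream) : Prop :=
  ∀ x, (Γ x = none ∧ ρo x = none) ∨
    ∃ τ w, Γ x = some τ ∧ ρo x = some w ∧ w ∈ WellPaced τ ρi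

/-- Typing rules for expressions. -/
inductive HasTy {Vi Vo : Type} (Γ : Ctx Vi Vo) : Expr Vi Vo → Pacing Vi → Prop where
  | const {v : ℤ} {τ} : HasTy Γ (.const v) τ
  | binop {e₁ e₂ τ} : HasTy Γ e₁ τ → HasTy Γ e₂ τ → HasTy Γ (.add e₁ e₂) τ
  | directOut {x τcan τ} : Γ x = some τcan → Refines τ τcan → HasTy Γ (.varOut x) τ
  | directIn {x τ} : Refines τ (.pvar x) → HasTy Γ (.varIn x) τ
  | prevOut {x τcan e τ} : Γ x = some τcan → HasTy Γ e τ → Refines τ τcan →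
      HasTy Γ (.prevOut x e) τ
  | prevIn {x e τ} : HasTy Γ e τ → Refines τ (.pvar x) → HasTy Γ (.prevIn x e) τ
  | holdOut {x e τ} : (Γ x).isSome → HasTy Γ e τ → HasTy Γ (.holdOut x e) τ
  | holdIn {x e τ} : HasTy Γ e τ → HasTy Γ (.holdIn x e) τ

/-- Typing rules for specifications. -/
inductive SpecTy {Vi Vo : Type} [DecidableEq Vo] : Ctx Vi Vo → List (Equ Vi Vo) → Prop where
  | empty {Γ} : SpecTy Γ []
  | equation {Γ x τ e S} : Γ x = none → HasTy Γ e τ →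
      SpecTy (Function.update Γ x (some τ)) S → SpecTy Γ (⟨x, τ, e⟩ :: S)

/-- Semantic typing of expressions. -/
def SemTyExpr {Vi Vo : Type} (Γ : Ctx Vi Vo) (e : Expr Vi Vo) (τ : Pacing Vi) : Prop :=
  ∀ (ρi : Vi → RStream) (ρo : Vo → Option RStream), InCtx Γ ρi ρo →
    ∀ n ∈ PacingDen ρi τ, PExprDen ρi ρo e n ≠ none

/-- Semantic typing of specifications. -/
def SemTySpec {Vi Vo : Type} (Γ : Ctx Vi Vo) (S : List (Equ Vi Vo)) : Prop :=
  ∀ (ρi : Vi → RStream) (ρ₁ : Vo → Option RStream), InCtx Γ ρi ρ₁ →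
    ∃ ρ₂ : Vo → RStream, SatSpec S ρi (totalize ρ₁ ρ₂)

/-!
A well-typed specification is solved one equation at a time, following the typing derivation.
For `x @ τ := e`, expression typing guarantees that `e` is defined at every `τ`-tick under any
partial output map in `⟦Γ⟧`, so the partial value of `e` restricted to the `τ`-ticks is a
`τ`-well-paced stream; it extends the partial map to one in `⟦Γ, x : τ⟧`, from which the rest of
the specification is solved. Since `e` reads only variables of `Γ`, its partial value is its value
under every totalization, which makes the restricted stream a solution of the equation.
-/

lemma prev_ne_none {w : RStream} {n : ℕ} {v : Option ℤ}
    (hw : w n ≠ none) (hv : v ≠ none) : Prev w n v ≠ none := by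
  unfold Prev
  cases hwn : w n with
  | none => exact absurd hwn hw
  | some _ =>
    cases n with
    | zero => simpa using hv
    | succ m => cases hL : Last w m <;> simp [hL, hv]

lemma hold_ne_none {w : RStream} {n : ℕ} {v : Option ℤ}
    (hv : v ≠ none) : Hold w n v ≠ none := by
  unfold Hold
  cases Last w n <;> simp [hv]

lemma addOpt_ne_none {a b : Option ℤ} (ha : a ≠ none) (hb : b ≠ none) : addOpt a b ≠ none := by
  obtain ⟨a, rfl⟩ := Option.ne_none_iff_exists'.mp ha
  obtain ⟨b, rfl⟩ := Option.ne_none_iff_exists'.mp hb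
  simp [addOpt]

open Classical in
noncomputable def restrictPacing {Vi : Type} (τ : Pacing Vi) (ρi : Vi → RStream) (w : RStream) :
    RStream :=
  fun n => if n ∈ PacingDen ρi τ then w n else none

section restrictPacing

variable {Vi : Type} {τ : Pacing Vi} {ρi : Vi → RStream} {w : RStream}

lemma restrictPacing_mem_wellPaced (hw : ∀ n ∈ PacingDen ρi τ, w n ≠ none) :
    restrictPacing τ ρi w ∈ WellPaced τ ρi := by
  intro n
  by_cases hn : n ∈ PacingDen ρi τ <;> simp [restrictPacing, hn, hw]

lemma restrictPacing_lessDef : LessDef (restrictPacing τ ρi w) w := by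
  intro n
  by_cases hn : n ∈ PacingDen ρi τ <;> simp [restrictPacing, hn]

end restrictPacing

lemma totalize_update_of_eq_none {Vo : Type} [DecidableEq Vo] {ρ₁ : Vo → Option RStream}
    {x : Vo} (hx : ρ₁ x = none) (w : RStream) (ρ₂ : Vo → RStream) :
    totalize (Function.update ρ₁ x (some w)) ρ₂ = totalize ρ₁ (Function.update ρ₂ x w) := by
  funext y
  by_cases hy : y = x
  · subst hy; simp [totalize, hx]
  · simp [totalize, hy]

namespace InCtx

variable {Vi Vo : Type} {Γ : Ctx Vi Vo} {ρi : Vi → RStream} {ρ₁ : Vo → Option RStream}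

lemma eq_none_of_eq_none (hctx : InCtx Γ ρi ρ₁) {x : Vo} (hx : Γ x = none) : ρ₁ x = none := by
  rcases hctx x with ⟨_, h⟩ | ⟨_, _, h, _, _⟩
  · exact h
  · simp [hx] at h

lemma getStream_mem_wellPaced (hctx : InCtx Γ ρi ρ₁) {x : Vo} {τ : Pacing Vi}
    (hx : Γ x = some τ) : getStream (ρ₁ x) ∈ WellPaced τ ρi := by
  rcases hctx x with ⟨h, _⟩ | ⟨τ', w, h, hw, hwp⟩
  · simp [hx] at h
  · obtain rfl : τ' = τ := Option.some_injective _ (h.symm.trans hx)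
    rw [getStream, hw]
    exact hwp

lemma getStream_eq_totalize (hctx : InCtx Γ ρi ρ₁) {x : Vo} (hx : (Γ x).isSome)
    (ρ₂ : Vo → RStream) : getStream (ρ₁ x) = totalize ρ₁ ρ₂ x := by
  rcases hctx x with ⟨h, _⟩ | ⟨_, _, _, hw, _⟩
  · simp [h] at hx
  · rw [getStream, totalize, hw]
    rfl

lemma update [DecidableEq Vo] (hctx : InCtx Γ ρi ρ₁) {x : Vo} {τ : Pacing Vi} {w : RStream}
    (hw : w ∈ WellPaced τ ρi) :
    InCtx (Function.update Γ x (some τ)) ρi (Function.update ρ₁ x (some w)) := by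
  intro y
  by_cases hy : y = x
  · subst hy
    exact Or.inr ⟨τ, w, Function.update_self .., Function.update_self .., hw⟩
  · rw [show Function.update Γ x (some τ) y = Γ y from Function.update_of_ne hy _ _]
    simpa only [Function.update_of_ne hy] using hctx y

end InCtx

namespace HasTy

variable {Vi Vo : Type} {Γ : Ctx Vi Vo} {e : Expr Vi Vo} {τ : Pacing Vi}

theorem semTyExpr (h : HasTy Γ e τ) : SemTyExpr Γ e τ := by
  intro ρi ρo hctx n
  induction h with
  | const => simp [PExprDen]
  | binop _ _ ih₁ ih₂ => exact fun hn => addOpt_ne_none (ih₁ hn) (ih₂ hn)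
  | directOut hx href => exact fun hn => (hctx.getStream_mem_wellPaced hx n).mp (href ρi hn)
  | directIn href => exact fun hn => href ρi hn
  | prevOut hx _ href ih =>
    exact fun hn => prev_ne_none ((hctx.getStream_mem_wellPaced hx n).mp (href ρi hn)) (ih hn)
  | prevIn _ href ih => exact fun hn => prev_ne_none (href ρi hn) (ih hn)
  | holdOut _ _ ih => exact fun hn => hold_ne_none (ih hn)
  | holdIn _ ih => exact fun hn => hold_ne_none (ih hn)

theorem pExprDen_eq_exprDen_totalize (h : HasTy Γ e τ) {ρi : Vi → RStream}
    {ρ₁ : Vo → Option RStream} (hctx : InCtx Γ ρi ρ₁) (ρ₂ : Vo → RStream) :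
    PExprDen ρi ρ₁ e = ExprDen ρi (totalize ρ₁ ρ₂) e := by
  induction h with
  | const | directIn _ => rfl
  | binop _ _ ih₁ ih₂ => funext n; simp only [PExprDen, ExprDen, ih₁, ih₂]
  | directOut hx _ => exact hctx.getStream_eq_totalize (Option.isSome_of_eq_some hx) ρ₂
  | prevOut hx _ _ ih =>
    funext n
    simp only [PExprDen, ExprDen, ih,
      hctx.getStream_eq_totalize (Option.isSome_of_eq_some hx) ρ₂]
  | prevIn _ _ ih | holdIn _ ih => funext n; simp only [PExprDen, ExprDen, ih]
  | holdOut hx _ ih =>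
    funext n
    simp only [PExprDen, ExprDen, ih, hctx.getStream_eq_totalize hx ρ₂]

end HasTy

theorem sound_typing_spec {Vi Vo : Type} [DecidableEq Vo] (Γ : Ctx Vi Vo)
    (S : List (Equ Vi Vo)) (h : SpecTy Γ S) : SemTySpec Γ S := by
  induction h with
  | empty => exact fun _ _ _ => ⟨fun _ _ => none, by simp [SatSpec]⟩
  | @equation Γ x τ e S hΓx hty _ ih =>
    intro ρi ρ₁ hctx
    set w := restrictPacing τ ρi (PExprDen ρi ρ₁ e)
    have hwp : w ∈ WellPaced τ ρi :=
      restrictPacing_mem_wellPaced (hty.semTyExpr ρi ρ₁ hctx)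
    obtain ⟨ρ₂, hsat⟩ := ih ρi _ (hctx.update hwp)
    have hρx := hctx.eq_none_of_eq_none hΓx
    have htot := totalize_update_of_eq_none hρx w ρ₂
    have hxw : totalize ρ₁ (Function.update ρ₂ x w) x = w := by simp [totalize, hρx]
    refine ⟨Function.update ρ₂ x w, List.forall_mem_cons.mpr ⟨?_, htot ▸ hsat⟩⟩
    rw [SatEq, hxw, ← hty.pExprDen_eq_exprDen_totalize hctx]
    exact ⟨hwp, restrictPacing_lessDef⟩
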